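/- arXiv:2004.11653 — 5 statements merged into one kernel-verified Lean document; each statement's English description precedes it below -/
import Mathlib

section
/- Let n ∈ ℕ₀, G ∈ 𝔗_a^{=n}, and let H ∈ 𝔗_a be reflexive with h_H ∈ {n, n+1}. Then for every ξ ∈ 𝓗(G,H): ξ ∈ 𝓢(G,H) if and only if ξ(P_{i-1})ξ(P_i) ∈ A(H*) for every path P = P_0,…,P_n of length n in G and every 1 ≤ i ≤ n. -/
/-- A finite digraph: a finite nonempty vertex set `V ⊆ ℕ` together with an
arc set `A ⊆ V × V`. -/
structure Dgraph where
  V : Finset ℕ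
  nonempty : V.Nonempty
  A : Finset (ℕ × ℕ)
  A_sub : ∀ p ∈ A, p.1 ∈ V ∧ p.2 ∈ V

namespace Dgraph

/-- The set of proper arcs of `G`, i.e. the arc set of `G*`. -/
def Astar (G : Dgraph) : Finset (ℕ × ℕ) := G.A.filter (fun p => p.1 ≠ p.2)

/-- `G` is reflexive. -/
def IsRefl (G : Dgraph) : Prop := ∀ v ∈ G.V, (v, v) ∈ G.A

/-- `p` is a path in `G` (a nonempty list of pairwise distinct vertices,
consecutive ones joined by arcs).  Its length as a path is `p.length - 1`. -/
def IsPath (G : Dgraph) (p : List ℕ) : Prop :=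
  p ≠ [] ∧ p.Nodup ∧ (∀ v ∈ p, v ∈ G.V) ∧ p.Chain' (fun v w => (v, w) ∈ G.A)

/-- `p` is a path in `G*`. -/
def IsPathStar (G : Dgraph) (p : List ℕ) : Prop :=
  p ≠ [] ∧ p.Nodup ∧ (∀ v ∈ p, v ∈ G.V) ∧ p.Chain' (fun v w => (v, w) ∈ G.A ∧ v ≠ w)

/-- `G*` contains a closed walk. -/
def HasClosedWalkStar (G : Dgraph) : Prop :=
  ∃ p : List ℕ, (∀ v ∈ p, v ∈ G.V) ∧ p.Chain' (fun v w => (v, w) ∈ G.A ∧ v ≠ w) ∧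
    2 ≤ p.length ∧ p.head? = p.getLast?

/-- membership in the class `𝔗ₐ`: `G*` is acyclic. -/
def MemTa (G : Dgraph) : Prop := ¬ G.HasClosedWalkStar

/-- The height of `G`: the maximal length of a path in `G`. -/
noncomputable def height (G : Dgraph) : ℕ :=
  sSup {n | ∃ p, G.IsPath p ∧ p.length = n + 1}

/-- The interval `[v,w]_G`. -/
def interval (G : Dgraph) (v w : ℕ) : Finset ℕ :=
  G.V.filter (fun z => (v, z) ∈ G.A ∧ (z, w) ∈ G.A)

/-- `ι(v,w)_G`, the cardinality of the interval `[v,w]_G`. -/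
def iota (G : Dgraph) (v w : ℕ) : ℕ := (G.interval v w).card

/-- The set `𝓗(G,H)` of homomorphisms from `G` to `H` (represented as total
maps `ℕ → ℕ`, normalized to `0` outside of `V(G)`). -/
def Hom (G H : Dgraph) : Set (ℕ → ℕ) :=
  {f | (∀ v ∈ G.V, f v ∈ H.V) ∧ (∀ p ∈ G.A, (f p.1, f p.2) ∈ H.A) ∧
    ∀ v, v ∉ G.V → f v = 0}

/-- The set `𝓢(G,H)` of strict homomorphisms from `G` to `H`. -/
def SHom (G H : Dgraph) : Set (ℕ → ℕ) :=
  {f ∈ Hom G H | ∀ p ∈ G.Astar, f p.1 ≠ f p.2}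

/-- `μ_ξ(G)`, for a homomorphism `ξ` from `G` into `H`. -/
def mu (G H : Dgraph) (f : ℕ → ℕ) : ℕ :=
  ∑ p ∈ G.Astar, H.iota (f p.1) (f p.2)

/-- `L` is a subgraph of `G`. -/
def Subgraph (L G : Dgraph) : Prop := L.V ⊆ G.V ∧ L.A ⊆ G.A

/-- Restriction of a map to a vertex set (normalized to `0` outside). -/
def restrict (X : Finset ℕ) (f : ℕ → ℕ) : ℕ → ℕ := fun x => if x ∈ X then f x else 0

/-- `𝓜(L,H)`: homomorphisms from `L` to `H` with maximal `μ`. -/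
def MSet (L H : Dgraph) : Set (ℕ → ℕ) :=
  {f ∈ Hom L H | ∀ g ∈ Hom L H, mu L H g ≤ mu L H f}

/-- `𝓜^𝓛(G,H)`. -/
def MLSet (G H : Dgraph) (𝓛 : Set Dgraph) : Set (ℕ → ℕ) :=
  {f ∈ Hom G H | ∀ L ∈ 𝓛, restrict L.V f ∈ MSet L H}

/-- `𝓙^𝓛_{G,H'}(ξ)` for `ξ ∈ 𝓗(G,H)`. -/
def JSet (G H H' : Dgraph) (𝓛 : Set Dgraph) (ξ : ℕ → ℕ) : Set (ℕ → ℕ) :=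
  {ζ ∈ Hom G H' | ∀ L ∈ 𝓛, ∀ p ∈ L.Astar,
    H'.iota (ζ p.1) (ζ p.2) = H.iota (ξ p.1) (ξ p.2)}

/-- The digraph `P_×` of a path `P = P_0, …, P_ℓ`: vertex set `{P_0,…,P_ℓ}`
and arcs `P_{i-1}P_i`. -/
def pathGraph (P : List ℕ) (h : P ≠ []) : Dgraph where
  V := P.toFinset
  nonempty := by
    obtain ⟨a, t, rfl⟩ := List.exists_cons_of_ne_nil h
    exact ⟨a, by simp⟩
  A := (P.zip P.tail).toFinset
  A_sub := by
    intro p hp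
    rw [List.mem_toFinset] at hp
    have h1 := List.of_mem_zip hp
    exact ⟨List.mem_toFinset.mpr h1.1, List.mem_toFinset.mpr (List.mem_of_mem_tail h1.2)⟩

/-- `𝓛(G)`: the set of the digraphs `P_×` for the paths `P` of length `h_G` in `G`. -/
def LSet (G : Dgraph) : Set Dgraph :=
  {D | ∃ (P : List ℕ) (h : P ≠ []), G.IsPath P ∧ P.length = G.height + 1 ∧
    D = pathGraph P h}

/-- The class `𝕽`: reflexive digraphs `R ∈ 𝔗ₐ` with
`𝓜^{𝓛(R)}(R,R) ∩ 𝓢(R,R) ≠ ∅`. -/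
def MemR (R : Dgraph) : Prop :=
  R.MemTa ∧ R.IsRefl ∧ (MLSet R R (LSet R) ∩ SHom R R).Nonempty

/-- `G` is a poset: reflexive, antisymmetric and transitive. -/
def IsPoset (G : Dgraph) : Prop :=
  G.IsRefl ∧ (∀ v w, (v, w) ∈ G.A → (w, v) ∈ G.A → v = w) ∧
    (∀ u v w, (u, v) ∈ G.A → (v, w) ∈ G.A → (u, w) ∈ G.A)

/-- The class `𝔗ₐ^{=n}`: digraphs in `𝔗ₐ` of height `n` in which every vertex
lies on a path of length `n`. -/
def MemTaEq (n : ℕ) (G : Dgraph) : Prop :=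
  G.MemTa ∧ G.height = n ∧ ∀ v ∈ G.V, ∃ p, G.IsPath p ∧ p.length = n + 1 ∧ v ∈ p

/-- A maximal path in `G`: no path in `G` properly contains its vertex set. -/
def MaximalPath (G : Dgraph) (P : List ℕ) : Prop :=
  G.IsPath P ∧ ∀ Q, G.IsPath Q → (∀ v ∈ P, v ∈ Q) → ∀ v ∈ Q, v ∈ P

end Dgraph

open Dgraph

/-!
Write `level v` for the length of a longest path of `G*` ending at `v`. In an acyclic digraph
the level strictly increases along proper arcs, so on a path of maximal length `n` the vertex in
position `i` has level `i`. Let `vw` be a proper arc of `G` with `ξ v = ξ w`, where `v` sits in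
position `a` of a longest path `P` and `w` in position `b > a` of a longest path `Q`.
If `b = a + 1`, then `P_0, …, P_a, Q_{a+1}, …, Q_n` is a longest path through `vw`, and the
hypothesis gives `ξ v ≠ ξ w`. Otherwise `ξ Q_0, …, ξ Q_b = ξ P_a, …, ξ P_n` is a walk in `H*`
of length `b + n - a ≥ n + 2`, impossible since `H*` is acyclic and `h_H ≤ n + 1`.
-/

namespace Dgraph

def AdjStar (K : Dgraph) (v w : ℕ) : Prop := (v, w) ∈ K.A ∧ v ≠ w

lemma mem_Astar {K : Dgraph} {v w : ℕ} : (v, w) ∈ K.Astar ↔ K.AdjStar v w :=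
  Finset.mem_filter

lemma isChain_map_adjStar_iff {K : Dgraph} (f : ℕ → ℕ) (l : List ℕ) :
    (l.map f).IsChain K.AdjStar ↔
      ∀ i, i + 1 < l.length → (f (l.getD i 0), f (l.getD (i + 1) 0)) ∈ K.Astar := by
  rw [List.isChain_map, List.isChain_iff_getElem]
  refine forall_congr' fun i => ⟨fun h hi => ?_, fun h hi => ?_⟩
  · rw [List.getD_eq_getElem _ _ (by omega), List.getD_eq_getElem _ _ hi, mem_Astar]
    exact h hi
  · have := h hi
    rwa [List.getD_eq_getElem _ _ (by omega), List.getD_eq_getElem _ _ hi, mem_Astar] at this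

lemma IsPath.isChain_adjStar {K : Dgraph} {P : List ℕ} (hP : K.IsPath P) : P.IsChain K.AdjStar :=
  List.isChain_iff_getElem.2 fun i hi =>
    ⟨List.isChain_iff_getElem.1 hP.2.2.2 i hi, fun h => by
      have := (hP.2.1.getElem_inj_iff).1 h; omega⟩

section Level

variable (K : Dgraph)

lemma length_le_card {p : List ℕ} (hp : p.Nodup) (hpV : ∀ v ∈ p, v ∈ K.V) :
    p.length ≤ K.V.card := by
  rw [← List.toFinset_card_of_nodup hp]
  exact Finset.card_le_card fun v hv => hpV v (List.mem_toFinset.1 hv)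

noncomputable def level (v : ℕ) : ℕ :=
  sSup {l | ∃ p, K.IsPathStar p ∧ p.getLast? = some v ∧ p.length = l + 1}

lemma bddAbove_level (v : ℕ) :
    BddAbove {l | ∃ p, K.IsPathStar p ∧ p.getLast? = some v ∧ p.length = l + 1} :=
  ⟨K.V.card, fun _ ⟨_, ⟨_, hp, hpV, _⟩, _, hlen⟩ => by have := K.length_le_card hp hpV; omega⟩

lemma bddAbove_height : BddAbove {l | ∃ p, K.IsPath p ∧ p.length = l + 1} :=
  ⟨K.V.card, fun _ ⟨_, ⟨_, hp, hpV, _⟩, hlen⟩ => by have := K.length_le_card hp hpV; omega⟩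

variable {K}

lemma exists_isPathStar_level {v : ℕ} (hv : v ∈ K.V) :
    ∃ p, K.IsPathStar p ∧ p.getLast? = some v ∧ p.length = K.level v + 1 := by
  refine Nat.sSup_mem ?_ (K.bddAbove_level v)
  exact ⟨0, [v], ⟨by simp, by simp, by simpa, List.isChain_singleton v⟩, rfl, rfl⟩

lemma le_level {p : List ℕ} {v : ℕ} (hp : K.IsPathStar p) (hlast : p.getLast? = some v) :
    p.length - 1 ≤ K.level v :=
  le_csSup (K.bddAbove_level v) ⟨p, hp, hlast, by have := hp.1; cases p <;> simp_all⟩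

lemma level_le_height {v : ℕ} (hv : v ∈ K.V) : K.level v ≤ K.height := by
  obtain ⟨p, ⟨hne, hp, hpV, hchain⟩, -, hlen⟩ := exists_isPathStar_level hv
  exact le_csSup K.bddAbove_height ⟨p, ⟨hne, hp, hpV, hchain.imp fun _ _ h => h.1⟩, hlen⟩

/-- A repeated vertex on a walk in `K*` would cut out a closed walk. -/
lemma nodup_of_isChain_adjStar (hK : K.MemTa) {l : List ℕ} (hlV : ∀ v ∈ l, v ∈ K.V)
    (hl : l.IsChain K.AdjStar) : l.Nodup := by
  induction l with
  | nil => exact List.nodup_nil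
  | cons a t ih =>
    refine List.nodup_cons.2 ⟨fun ha => hK ?_, ih (fun v hv => hlV v (by simp [hv])) hl.tail⟩
    obtain ⟨s, r, rfl⟩ := List.append_of_mem ha
    refine ⟨a :: s ++ [a], fun v hv => hlV v ?_, hl.prefix ⟨r, by simp⟩, by simp, ?_⟩
    · simp only [List.cons_append, List.mem_cons, List.mem_append] at hv ⊢
      tauto
    · rw [List.getLast?_concat]
      rfl

lemma level_lt_level (hK : K.MemTa) {u w : ℕ} (h : K.AdjStar u w) :
    K.level u < K.level w := by
  obtain ⟨hu, hw⟩ : u ∈ K.V ∧ w ∈ K.V := K.A_sub _ h.1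
  obtain ⟨p, ⟨-, -, hpV, hp⟩, hlast, hlen⟩ := exists_isPathStar_level hu
  have hchain : (p ++ [w]).IsChain K.AdjStar :=
    List.IsChain.append hp (List.isChain_singleton w) (by simp_all)
  have hpwV : ∀ v ∈ p ++ [w], v ∈ K.V := fun v hv =>
    (List.mem_append.1 hv).elim (hpV v) fun hv => List.mem_singleton.1 hv ▸ hw
  have := le_level ⟨by simp, nodup_of_isChain_adjStar hK hpwV hchain, hpwV, hchain⟩
    List.getLast?_concat
  simp only [List.length_append, List.length_singleton] at this
  omega

lemma level_add_sub_le_of_isChain (hK : K.MemTa) {l : List ℕ} (hl : l.IsChain K.AdjStar)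
    {i j : ℕ} (hij : i ≤ j) (hj : j < l.length) :
    K.level l[i] + (j - i) ≤ K.level l[j] := by
  induction j, hij using Nat.le_induction with
  | base => simp
  | succ j hij ih =>
    have := level_lt_level hK (hl.getElem j hj)
    have := ih (by omega)
    omega

/-- `q` reaches the common vertex in `j` steps and `p` leaves it for `p.length - 1 - i` more. -/
lemma add_sub_le_height_of_isChain (hK : K.MemTa) {p q : List ℕ} (hp : p.IsChain K.AdjStar)
    (hpV : ∀ v ∈ p, v ∈ K.V) (hq : q.IsChain K.AdjStar) {i j : ℕ} (hi : i < p.length)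
    (hj : j < q.length) (h : q[j] = p[i]) : j + (p.length - 1 - i) ≤ K.height := by
  have hq' := level_add_sub_le_of_isChain hK hq (Nat.zero_le j) hj
  have hp' := level_add_sub_le_of_isChain hK hp (show i ≤ p.length - 1 by omega) (by omega)
  have := level_le_height (hpV _ (List.getElem_mem (show p.length - 1 < p.length by omega)))
  rw [h] at hq'
  omega

end Level

section LongestPath

variable {K : Dgraph} (hK : K.MemTa) {P : List ℕ} (hP : K.IsPath P)
  (hlen : P.length = K.height + 1)
include hK hP hlen

lemma level_getElem {i : ℕ} (hi : i < P.length) : K.level P[i] = i := by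
  have hfirst := level_add_sub_le_of_isChain hK hP.isChain_adjStar (Nat.zero_le i) hi
  have hlast := level_add_sub_le_of_isChain hK hP.isChain_adjStar
    (show i ≤ K.height by omega) (by omega)
  have := level_le_height (hP.2.2.1 _ (List.getElem_mem (show K.height < P.length by omega)))
  omega

lemma level_lt_of_mem_take {a v : ℕ} (hv : v ∈ P.take a) : K.level v < a := by
  obtain ⟨i, hi, rfl⟩ := List.mem_iff_getElem.1 hv
  rw [List.length_take] at hi
  rw [List.getElem_take, level_getElem hK hP hlen]
  omega

lemma le_level_of_mem_drop {a v : ℕ} (hv : v ∈ P.drop a) : a ≤ K.level v := by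
  obtain ⟨i, hi, rfl⟩ := List.mem_iff_getElem.1 hv
  rw [List.length_drop] at hi
  rw [List.getElem_drop, level_getElem hK hP hlen]
  omega

end LongestPath

/-- Follow `P` up to the arc and `Q` after it; levels keep the two pieces disjoint. -/
lemma exists_longest_isPath_infix {K : Dgraph} (hK : K.MemTa) {P Q : List ℕ} (hP : K.IsPath P)
    (hPlen : P.length = K.height + 1) (hQ : K.IsPath Q) (hQlen : Q.length = K.height + 1)
    {a : ℕ} (ha : a + 1 < P.length) (harc : (P[a], Q[a + 1]) ∈ K.A) :
    ∃ R, K.IsPath R ∧ R.length = K.height + 1 ∧ [P[a], Q[a + 1]] <:+: R := by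
  have hsplit : P.take (a + 1) ++ Q.drop (a + 1) =
      P.take a ++ [P[a], Q[a + 1]] ++ Q.drop (a + 2) := by
    rw [List.take_succ_eq_append_getElem (show a < P.length by omega),
      List.drop_eq_getElem_cons (show a + 1 < Q.length by omega)]
    simp only [List.append_assoc, List.cons_append, List.nil_append]
  have hlen : (P.take (a + 1) ++ Q.drop (a + 1)).length = K.height + 1 := by
    rw [List.length_append, List.length_take, List.length_drop]
    omega
  refine ⟨_, ⟨List.ne_nil_of_length_pos (by omega), ?_, ?_, ?_⟩, hlen,
    ⟨P.take a, Q.drop (a + 2), hsplit.symm⟩⟩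
  · refine List.nodup_append.2 ⟨hP.2.1.sublist (List.take_sublist _ _),
      hQ.2.1.sublist (List.drop_sublist _ _), fun v hv w hw hvw => ?_⟩
    have := level_lt_of_mem_take hK hP hPlen hv
    have := le_level_of_mem_drop hK hQ hQlen (hvw ▸ hw)
    omega
  · intro v hv
    rcases List.mem_append.1 hv with hv | hv
    · exact hP.2.2.1 v (List.mem_of_mem_take hv)
    · exact hQ.2.2.1 v (List.mem_of_mem_drop hv)
  · refine (List.IsChain.take hP.2.2.2 (a + 1)).append (List.IsChain.drop hQ.2.2.2 (a + 1)) ?_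
    simp only [List.getLast?_take, List.head?_drop, Nat.add_sub_cancel, Nat.add_one_ne_zero,
      if_false, List.getElem?_eq_getElem (show a < P.length by omega),
      List.getElem?_eq_getElem (show a + 1 < Q.length by omega)]
    simpa using harc

lemma isChain_map_of_mem_SHom {G H : Dgraph} {ξ : ℕ → ℕ} (hξ : ξ ∈ SHom G H) {P : List ℕ}
    (hP : G.IsPath P) : (P.map ξ).IsChain H.AdjStar :=
  List.isChain_map_of_isChain ξ (fun _ _ h => ⟨hξ.1.2.1 _ h.1, hξ.2 _ (mem_Astar.2 h)⟩)
    hP.isChain_adjStar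

end Dgraph

theorem stmt_12_general (n : ℕ) (G : Dgraph) (hG : MemTaEq n G)
    (H : Dgraph) (hHt : H.MemTa)
    (hh : H.height = n ∨ H.height = n + 1)
    (ξ : ℕ → ℕ) (hξ : ξ ∈ Hom G H) :
    ξ ∈ SHom G H ↔
      ∀ P : List ℕ, G.IsPath P → P.length = n + 1 →
        ∀ i, i + 1 < P.length →
          (ξ (P.getD i 0), ξ (P.getD (i + 1) 0)) ∈ H.Astar := by
  obtain ⟨hGt, rfl, hGcover⟩ := hG
  refine ⟨fun hs P hP _ => (isChain_map_adjStar_iff ξ P).1 (isChain_map_of_mem_SHom hs hP),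
    fun hyp => ⟨hξ, ?_⟩⟩
  replace hyp P hP hlen := (isChain_map_adjStar_iff ξ P).2 (hyp P hP hlen)
  rintro ⟨v, w⟩ hvw (heq : ξ v = ξ w)
  rw [mem_Astar] at hvw
  obtain ⟨P, hP, hPlen, hvP⟩ := hGcover v (G.A_sub _ hvw.1).1
  obtain ⟨Q, hQ, hQlen, hwQ⟩ := hGcover w (G.A_sub _ hvw.1).2
  obtain ⟨a, ha, rfl⟩ := List.getElem_of_mem hvP
  obtain ⟨b, hb, rfl⟩ := List.getElem_of_mem hwQ
  have hab := level_lt_level hGt hvw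
  rw [level_getElem hGt hP hPlen, level_getElem hGt hQ hQlen] at hab
  -- `ξ` maps both longest paths to walks in `H*` meeting at `ξ v = ξ w`
  have hba := add_sub_le_height_of_isChain hHt (hyp P hP hPlen)
    (List.forall_mem_map.2 fun x hx => hξ.1 x (hP.2.2.1 x hx)) (hyp Q hQ hQlen)
    (i := a) (j := b) (by simpa using ha) (by simpa using hb) (by simpa using heq.symm)
  simp only [List.length_map] at hba
  obtain rfl : b = a + 1 := by omega
  obtain ⟨R, hR, hRlen, hPQR⟩ := exists_longest_isPath_infix hGt hP hPlen hQ hQlen (by omega) hvw.1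
  have := (hyp R hR hRlen).infix (hPQR.map ξ)
  simp only [List.map_cons, List.map_nil, List.isChain_pair] at this
  exact this.2 heq

theorem stmt_12 (n : ℕ) (G : Dgraph) (hG : MemTaEq n G)
    (H : Dgraph) (hHt : H.MemTa) (hHr : H.IsRefl)
    (hh : H.height = n ∨ H.height = n + 1)
    (ξ : ℕ → ℕ) (hξ : ξ ∈ Hom G H) :
    ξ ∈ SHom G H ↔
      ∀ P : List ℕ, G.IsPath P → P.length = n + 1 →
        ∀ i, i + 1 < P.length →
          (ξ (P.getD i 0), ξ (P.getD (i + 1) 0)) ∈ H.Astar :=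
  stmt_12_general n G hG H hHt hh ξ hξ
end

section
/- Let n ∈ ℕ₀, let T ∈ 𝕽 with h_T = n, and let G ∈ 𝔗_a^{=n}. Then for every ρ ∈ 𝓢(G,T): 𝓢(G,T) = 𝓙^{𝓛(G)}_{G,T}(ρ). -/
open Dgraph

open List

/-! If `T ∈ 𝕽` has height `n`, a walk in `T*` with `n + 1` vertices admits no vertex between two
consecutive vertices `a, b`, so `ι(a, b) = 2`, whereas `ι(u, u) ≤ 1` since `T*` is acyclic.
A strict homomorphism maps the longest paths of `G` (also of height `n`) to such walks, so every
member of `𝓢(G,T)` has `ι = 2` on the arcs of `𝓛(G)`. Conversely `ι_ζ = ι_ρ = 2` there forces `ζ` to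
be strict along every longest path of `G`; since every vertex of `G` lies on one, a length count
shows that `ζ` is strict on all of `G`. -/

theorem List.mem_zip_tail_iff {α : Type*} {l : List α} {a b : α} :
    (a, b) ∈ l.zip l.tail ↔ ∃ s t, l = s ++ a :: b :: t := by
  induction l with
  | nil => simp
  | cons x l ih =>
    cases l with
    | nil => simp [eq_comm (a := [x]), append_eq_singleton_iff]
    | cons y l =>
      rw [tail_cons] at ih
      rw [tail_cons, zip_cons_cons, mem_cons, ih, Prod.mk.injEq]
      constructor
      · rintro (⟨rfl, rfl⟩ | ⟨s, t, h⟩)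
        · exact ⟨[], l, rfl⟩
        · exact ⟨x :: s, t, by rw [h, cons_append]⟩
      · rintro ⟨_ | ⟨z, s⟩, t, h⟩
        · simp_all
        · simp only [cons_append, cons.injEq] at h
          exact Or.inr ⟨s, t, h.2⟩

theorem List.IsChain.and {α : Type*} {R S : α → α → Prop} {l : List α} (hR : l.IsChain R)
    (hS : l.IsChain S) : l.IsChain fun a b => R a b ∧ S a b :=
  isChain_iff_forall_rel_of_append_cons_cons.mpr fun _ _ _ _ h =>
    ⟨isChain_iff_forall_rel_of_append_cons_cons.mp hR h,
      isChain_iff_forall_rel_of_append_cons_cons.mp hS h⟩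

namespace Dgraph

variable {D G T : Dgraph} {p : List ℕ}

def StarAdj (D : Dgraph) (v w : ℕ) : Prop := (v, w) ∈ D.A ∧ v ≠ w

def IsStarWalk (D : Dgraph) (p : List ℕ) : Prop := (∀ v ∈ p, v ∈ D.V) ∧ p.IsChain D.StarAdj

theorem isStarWalk_split {l₁ l₂ : List ℕ} {c : ℕ} :
    D.IsStarWalk (l₁ ++ c :: l₂) ↔ D.IsStarWalk (l₁ ++ [c]) ∧ D.IsStarWalk (c :: l₂) := by
  unfold IsStarWalk
  rw [isChain_split]
  constructor
  · rintro ⟨hV, h₁, h₂⟩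
    refine ⟨⟨fun v hv => hV v ?_, h₁⟩, fun v hv => hV v (by simp_all), h₂⟩
    simp only [mem_append, mem_cons] at hv ⊢
    tauto
  · rintro ⟨⟨hV₁, h₁⟩, hV₂, h₂⟩
    refine ⟨fun v hv => ?_, h₁, h₂⟩
    rcases mem_append.mp hv with hv | hv
    · exact hV₁ v (mem_append_left _ hv)
    · exact hV₂ v hv

theorem IsStarWalk.cons {v w : ℕ} (hvw : D.StarAdj v w) (h : D.IsStarWalk (w :: p)) :
    D.IsStarWalk (v :: w :: p) := by
  refine ⟨?_, h.2.cons_cons hvw⟩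
  rintro u (_ | ⟨_, hu⟩)
  · exact (D.A_sub _ hvw.1).1
  · exact h.1 u hu

theorem IsPath.isStarWalk (hp : G.IsPath p) : G.IsStarWalk p :=
  ⟨hp.2.2.1, IsChain.and hp.2.2.2 hp.2.1.isChain⟩

theorem IsPath.length_le_height_add_one (hp : G.IsPath p) : p.length ≤ G.height + 1 := by
  have hbdd : BddAbove {m | ∃ q, G.IsPath q ∧ q.length = m + 1} := by
    refine ⟨G.V.card, fun m ⟨q, hq, hlen⟩ => ?_⟩
    have := toFinset_card_of_nodup hq.2.1 ▸
      Finset.card_le_card fun v hv => hq.2.2.1 v (mem_toFinset.mp hv)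
    omega
  have hpos : 0 < p.length := length_pos_iff.mpr hp.1
  have := le_csSup hbdd ⟨p, hp, (Nat.sub_add_cancel hpos).symm⟩
  rw [height]
  omega

theorem MemTa.nodup_of_isStarWalk (hD : D.MemTa) (h : D.IsStarWalk p) : p.Nodup := by
  induction p with
  | nil => exact nodup_nil
  | cons a l ih =>
    refine nodup_cons.mpr ⟨fun ha => ?_, ih ⟨fun v hv => h.1 v (mem_cons_of_mem a hv), h.2.tail⟩⟩
    obtain ⟨s, t, rfl⟩ := append_of_mem ha
    refine hD ⟨a :: s ++ [a], fun v hv => h.1 v ?_, h.2.prefix ⟨t, by simp⟩, by simp,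
      by rw [getLast?_concat]; rfl⟩
    simp only [mem_append, mem_cons] at hv ⊢
    tauto

theorem MemTa.length_le_of_isStarWalk (hD : D.MemTa) (h : D.IsStarWalk p) :
    p.length ≤ D.height + 1 := by
  rcases eq_or_ne p [] with rfl | hne
  · simp
  · exact IsPath.length_le_height_add_one
      ⟨hne, hD.nodup_of_isStarWalk h, h.1, h.2.imp fun _ _ hab => hab.1⟩

theorem MemTa.iota_self_le_one (hD : D.MemTa) (u : ℕ) : D.iota u u ≤ 1 := by
  refine (Finset.card_le_card fun z hz => ?_).trans (Finset.card_singleton u).le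
  obtain ⟨hzV, huz, hzu⟩ := Finset.mem_filter.mp hz
  rw [Finset.mem_singleton]
  by_contra hne
  have huV := (D.A_sub _ huz).1
  refine hD ⟨[u, z, u], ?_, ?_, by simp, by simp⟩
  · simp only [mem_cons, not_mem_nil, or_false]
    rintro v (rfl | rfl | rfl) <;> assumption
  · exact isChain_cons_cons.mpr ⟨⟨huz, Ne.symm hne⟩, isChain_pair.mpr ⟨hzu, hne⟩⟩

/-- A vertex of `[a, b]` other than `a` and `b` could be inserted between them, producing a walk
in `T*` longer than `T` allows. -/
theorem iota_eq_two_of_isStarWalk (hTa : T.MemTa) (hT : T.IsRefl) {s t : List ℕ} {a b : ℕ}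
    (hQ : T.IsStarWalk (s ++ a :: b :: t)) (hlen : (s ++ a :: b :: t).length = T.height + 1) :
    T.iota a b = 2 := by
  obtain ⟨hsa, hab⟩ := isStarWalk_split.mp hQ
  have haV : a ∈ T.V := hab.1 a (by simp)
  have hbV : b ∈ T.V := hab.1 b (by simp)
  have hstar : T.StarAdj a b := (isChain_cons_cons.mp hab.2).1
  have hbt : T.IsStarWalk (b :: t) := ⟨fun v hv => hab.1 v (mem_cons_of_mem a hv), hab.2.tail⟩
  have hinterval : T.interval a b = {a, b} := by
    refine Finset.Subset.antisymm (fun z hz => ?_) ?_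
    · obtain ⟨hzV, haz, hzb⟩ := Finset.mem_filter.mp hz
      by_contra hz'
      simp only [Finset.mem_insert, Finset.mem_singleton, not_or] at hz'
      have hlonger : T.IsStarWalk (s ++ a :: z :: b :: t) :=
        isStarWalk_split.mpr ⟨hsa, (hbt.cons ⟨hzb, hz'.2⟩).cons ⟨haz, Ne.symm hz'.1⟩⟩
      have := hTa.length_le_of_isStarWalk hlonger
      simp only [length_append, length_cons] at this hlen
      omega
    · simp [Finset.insert_subset_iff, interval, hT a haV, hT b hbV, hstar.1, haV, hbV]
  rw [iota, hinterval, Finset.card_pair hstar.2]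

theorem IsStarWalk.map_of_isChain_ne {f : ℕ → ℕ} (hf : f ∈ Hom G T) (hp : G.IsStarWalk p)
    (hsep : p.IsChain fun a b => f a ≠ f b) : T.IsStarWalk (p.map f) := by
  refine ⟨fun v hv => ?_, (isChain_map f).mpr ((hp.2.and hsep).imp fun a b h => ?_)⟩
  · obtain ⟨u, hu, rfl⟩ := mem_map.mp hv
    exact hf.1 u (hp.1 u hu)
  · exact ⟨hf.2.1 (a, b) h.1.1, h.2⟩

theorem IsStarWalk.map_of_mem_SHom {f : ℕ → ℕ} (hf : f ∈ SHom G T) (hp : G.IsStarWalk p) :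
    T.IsStarWalk (p.map f) :=
  hp.map_of_isChain_ne hf.1 (hp.2.imp fun a b h => hf.2 (a, b) (Finset.mem_filter.mpr h))

theorem iota_map_eq_two_of_mem_SHom (hTa : T.MemTa) (hT : T.IsRefl) (hh : T.height = G.height)
    {f : ℕ → ℕ} (hf : f ∈ SHom G T) {s t : List ℕ} {a b : ℕ} (hP : G.IsPath (s ++ a :: b :: t))
    (hlen : (s ++ a :: b :: t).length = G.height + 1) : T.iota (f a) (f b) = 2 := by
  have h := hP.isStarWalk.map_of_mem_SHom hf
  simp only [map_append, map_cons] at h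
  exact iota_eq_two_of_isStarWalk hTa hT h (by simpa [hh] using hlen)

/-- If `f v = f w` for an arc `vw`, splice longest paths `s, v, t` and `s', w, t'` through `v`
and `w`: then `s, v, w, t'` is a walk in `G*` and `f s', f w, f t` one in `T*`, with `2n + 3`
vertices together, although each has at most `n + 1`. -/
theorem mem_SHom_of_strict_on_longest_paths {n : ℕ} (hG : MemTaEq n G) (hTa : T.MemTa)
    (hh : T.height = n) {f : ℕ → ℕ} (hf : f ∈ Hom G T)
    (hsep : ∀ P, G.IsPath P → P.length = n + 1 → P.IsChain fun a b => f a ≠ f b) :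
    f ∈ SHom G T := by
  obtain ⟨hGa, hGh, hGcover⟩ := hG
  refine ⟨hf, fun ⟨v, w⟩ hvw heq => ?_⟩
  obtain ⟨hvwA, hne⟩ := Finset.mem_filter.mp hvw
  obtain ⟨P, hP, hPlen, hvP⟩ := hGcover v (G.A_sub _ hvwA).1
  obtain ⟨P', hP', hP'len, hwP'⟩ := hGcover w (G.A_sub _ hvwA).2
  obtain ⟨s, t, rfl⟩ := append_of_mem hvP
  obtain ⟨s', t', rfl⟩ := append_of_mem hwP'
  have hGwalk : G.IsStarWalk (s ++ v :: w :: t') :=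
    isStarWalk_split.mpr ⟨(isStarWalk_split.mp hP.isStarWalk).1,
      (isStarWalk_split.mp hP'.isStarWalk).2.cons ⟨hvwA, hne⟩⟩
  have hTwalk : T.IsStarWalk (s'.map f ++ f w :: t.map f) := by
    have h := hP.isStarWalk.map_of_isChain_ne hf (hsep _ hP hPlen)
    have h' := hP'.isStarWalk.map_of_isChain_ne hf (hsep _ hP' hP'len)
    simp only [map_append, map_cons] at h h'
    exact isStarWalk_split.mpr ⟨(isStarWalk_split.mp h').1, heq ▸ (isStarWalk_split.mp h).2⟩
  have hGle := hGa.length_le_of_isStarWalk hGwalk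
  have hTle := hTa.length_le_of_isStarWalk hTwalk
  simp only [length_append, length_cons, length_map] at hGle hTle hPlen hP'len
  omega

theorem mem_JSet_LSet_iff {H H' : Dgraph} {ξ ζ : ℕ → ℕ} :
    ζ ∈ JSet G H H' (LSet G) ξ ↔ ζ ∈ Hom G H' ∧ ∀ P, G.IsPath P → P.length = G.height + 1 →
      ∀ s a b t, P = s ++ a :: b :: t → H'.iota (ζ a) (ζ b) = H.iota (ξ a) (ξ b) := by
  refine and_congr_right fun _ => ⟨fun h P hP hlen s a b t hst => ?_, ?_⟩
  · refine h _ ⟨P, hP.1, hP, hlen, rfl⟩ (a, b) (Finset.mem_filter.mpr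
      ⟨mem_toFinset.mpr (mem_zip_tail_iff.mpr ⟨s, t, hst⟩), ?_⟩)
    exact (isChain_iff_forall_rel_of_append_cons_cons.mp hP.isStarWalk.2 hst).2
  · rintro h _ ⟨P, _, hP, hlen, rfl⟩ ⟨a, b⟩ hab
    obtain ⟨s, t, hst⟩ := mem_zip_tail_iff.mp (mem_toFinset.mp (Finset.mem_filter.mp hab).1)
    exact h P hP hlen s a b t hst

end Dgraph

theorem stmt_13 (n : ℕ) (T : Dgraph) (hT : MemR T) (hhT : T.height = n)
    (G : Dgraph) (hG : MemTaEq n G) (ρ : ℕ → ℕ) (hρ : ρ ∈ SHom G T) :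
    SHom G T = JSet G T T (LSet G) ρ := by
  obtain ⟨hTa, hTrefl, -⟩ := hT
  have hh : T.height = G.height := hhT.trans hG.2.1.symm
  ext ζ
  rw [mem_JSet_LSet_iff]
  constructor
  · refine fun hζ => ⟨hζ.1, fun P hP hlen s a b t hst => ?_⟩
    subst hst
    rw [iota_map_eq_two_of_mem_SHom hTa hTrefl hh hζ hP hlen,
      iota_map_eq_two_of_mem_SHom hTa hTrefl hh hρ hP hlen]
  · rintro ⟨hζ, hJ⟩
    refine mem_SHom_of_strict_on_longest_paths hG hTa hhT hζ fun P hP hlen =>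
      isChain_iff_forall_rel_of_append_cons_cons.mpr ?_
    rintro a b s t rfl (hab : ζ a = ζ b)
    rw [← hG.2.1] at hlen
    have h := hJ _ hP hlen s a b t rfl
    rw [iota_map_eq_two_of_mem_SHom hTa hTrefl hh hρ hP hlen, hab] at h
    have := hTa.iota_self_le_one (ζ b)
    omega
end

section
/- A digraph G belongs to 𝔗_a if and only if every path in G is uniquely determined by its vertex set, i.e., any two paths in G having the same set of vertices coincide as sequences. -/
open Dgraph

/-!
If `G*` is acyclic, the reachability relation of `G*` is a strict order and every path of `G` runs
along it, so a path is its vertex set listed in increasing order, which pins it down. Conversely,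
a closed walk in `G*` contains a cycle `u, c₁, …, cₖ, u` with `k ≥ 1`, and the two paths
`u, c₁, …, cₖ` and `c₁, …, cₖ, u` have the same vertex set.
-/

open Relation

namespace List

theorem exists_cycle_infix_of_not_nodup {α : Type*} :
    ∀ {l : List α}, ¬l.Nodup → ∃ u c, (u :: c).Nodup ∧ u :: (c ++ [u]) <:+: l
  | [], h => absurd nodup_nil h
  | a :: t, h => by
    by_cases ht : t.Nodup
    · have ha : a ∈ t := by simpa [ht] using h
      obtain ⟨c, t', rfl⟩ := append_of_mem ha
      have hc := nodup_append.1 ht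
      refine ⟨a, c, nodup_cons.2 ⟨fun hac => hc.2.2 a hac a mem_cons_self rfl, hc.1⟩,
        [], t', by simp⟩
    · obtain ⟨u, c, hc, hinf⟩ := exists_cycle_infix_of_not_nodup ht
      exact ⟨u, c, hc, infix_cons hinf⟩

theorem not_nodup_of_head?_eq_getLast? {α : Type*} {l : List α} (hl : 2 ≤ l.length)
    (h : l.head? = l.getLast?) : ¬l.Nodup := by
  obtain ⟨a, t, rfl⟩ := exists_cons_of_length_pos (by omega : 0 < l.length)
  have ht : t ≠ [] := by rintro rfl; simp at hl
  rw [head?_cons, getLast?_eq_getLast_of_ne_nil (cons_ne_nil a t), getLast_cons ht,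
    Option.some_inj] at h
  exact not_nodup_cons_of_mem (h ▸ getLast_mem ht)

end List

namespace Dgraph

variable {G : Dgraph} {p q : List ℕ}

def ProperArc (G : Dgraph) (v w : ℕ) : Prop := (v, w) ∈ G.A ∧ v ≠ w

theorem IsPath.isChain_properArc (hp : G.IsPath p) : p.IsChain G.ProperArc := by
  have harcs : p.IsChain (fun v w => (v, w) ∈ G.A) := hp.2.2.2
  rw [List.isChain_iff_getElem] at harcs ⊢
  exact fun i hi => ⟨harcs i hi, fun he => by
    have := (List.Nodup.getElem_inj_iff hp.2.1).1 he
    omega⟩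

theorem IsPath.pairwise_transGen_properArc (hp : G.IsPath p) :
    p.Pairwise (TransGen G.ProperArc) :=
  List.isChain_iff_pairwise.1 (hp.isChain_properArc.imp fun _ _ => TransGen.single)

theorem MemTa.not_transGen_properArc (hG : G.MemTa) (v : ℕ) : ¬TransGen G.ProperArc v v := by
  intro hv
  obtain ⟨b, hvb, hbv⟩ := TransGen.head'_iff.1 hv
  obtain ⟨l, hchain, hlast⟩ := List.exists_isChain_cons_of_relationReflTransGen hbv
  have hwalk : (v :: b :: l).IsChain G.ProperArc := hchain.cons_cons hvb
  refine hG ⟨v :: b :: l, ?_, hwalk, by simp, ?_⟩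
  · exact hwalk.induction (· ∈ G.V) _ (fun _ y hxy _ => (G.A_sub _ hxy.1).2)
      fun _ => (G.A_sub _ hvb.1).1
  · rw [List.getLast?_eq_getLast_of_ne_nil (List.cons_ne_nil _ _), List.getLast_cons
      (List.cons_ne_nil _ _), hlast]
    rfl

theorem MemTa.eq_of_isPath (hG : G.MemTa) (hp : G.IsPath p) (hq : G.IsPath q)
    (h : ∀ v, v ∈ p ↔ v ∈ q) : p = q :=
  ((List.perm_ext_iff_of_nodup hp.2.1 hq.2.1).2 h).eq_of_pairwise
    (fun a _ _ _ hab hba => (hG.not_transGen_properArc a (hab.trans hba)).elim)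
    hp.pairwise_transGen_properArc hq.pairwise_transGen_properArc

theorem HasClosedWalkStar.exists_isPath_ne (hG : G.HasClosedWalkStar) :
    ∃ p q, G.IsPath p ∧ G.IsPath q ∧ (∀ v, v ∈ p ↔ v ∈ q) ∧ p ≠ q := by
  obtain ⟨w, hV, hw, hlen, hclosed⟩ := hG
  obtain ⟨u, c, hnodup, hinf⟩ :=
    List.exists_cycle_infix_of_not_nodup (List.not_nodup_of_head?_eq_getLast? hlen hclosed)
  have hcycle : (u :: (c ++ [u])).IsChain G.ProperArc := hw.infix hinf
  have hV' : ∀ v ∈ u :: (c ++ [u]), v ∈ G.V := fun v hv => hV v (hinf.subset hv)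
  obtain ⟨d, c, rfl⟩ : ∃ d c', c = d :: c' := by
    refine List.exists_cons_of_ne_nil ?_
    rintro rfl
    exact (List.isChain_pair.1 hcycle).2 rfl
  have hperm := List.perm_append_singleton u (d :: c)
  refine ⟨u :: d :: c, d :: c ++ [u], ⟨List.cons_ne_nil _ _, hnodup, ?_, ?_⟩,
    ⟨by simp, hperm.nodup_iff.2 hnodup, ?_, ?_⟩, fun v => hperm.mem_iff.symm, ?_⟩
  · exact fun v hv => hV' v (by simp only [List.mem_cons, List.mem_append] at hv ⊢; tauto)
  · exact (hcycle.prefix ⟨[u], by simp⟩).imp fun _ _ h => h.1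
  · exact fun v hv => hV' v (List.mem_cons_of_mem _ hv)
  · exact hcycle.tail.imp fun _ _ h => h.1
  · intro heq
    obtain rfl : u = d := (List.cons.inj heq).1
    exact List.not_nodup_cons_of_mem List.mem_cons_self hnodup

end Dgraph

theorem stmt_14 (G : Dgraph) :
    G.MemTa ↔ ∀ p q : List ℕ, G.IsPath p → G.IsPath q →
      (∀ v, v ∈ p ↔ v ∈ q) → p = q :=
  ⟨fun hG _ _ hp hq h => hG.eq_of_isPath hp hq h, fun h hG =>
    let ⟨p, q, hp, hq, hpq, hne⟩ := hG.exists_isPath_ne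
    hne (h p q hp hq hpq)⟩
end

section
/- Let α be an arc weight of a digraph G ∈ 𝔗_a. Then G(α)_ν ∈ 𝔗_a for every ν ∈ ℕ₀. If moreover G is a poset, then the digraph obtained from the transitive hull of G(α)_ν by adding a loop at every newly added vertex is a poset. -/
open Dgraph

/-- The digraph `G(α)_ν`, built from `G` by clamping the new vertex sets
`X p` between the endpoints of each proper arc `p` of `G`.  (The hypotheses
on the sets `X p` — pairwise disjointness, disjointness from `V(G)` and
cardinality `ν·α(p)` — are stated as assumptions of the theorems.) -/
def extGraph (G : Dgraph) (X : ℕ × ℕ → Finset ℕ) : Dgraph where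
  V := G.V ∪ G.Astar.biUnion X
  nonempty := by
    obtain ⟨v, hv⟩ := G.nonempty
    exact ⟨v, Finset.mem_union_left _ hv⟩
  A := G.A ∪ G.Astar.biUnion
    (fun p => (X p).image (fun x => (p.1, x)) ∪ (X p).image (fun x => (x, p.2)))
  A_sub := by
    intro q hq
    rcases Finset.mem_union.mp hq with h | h
    · have h1 := G.A_sub q h
      exact ⟨Finset.mem_union_left _ h1.1, Finset.mem_union_left _ h1.2⟩
    · obtain ⟨p, hp, hq2⟩ := Finset.mem_biUnion.mp h
      have hpA : p ∈ G.A := Finset.mem_of_mem_filter p hp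
      have hp1 := G.A_sub p hpA
      rcases Finset.mem_union.mp hq2 with h2 | h2
      · obtain ⟨x, hx, rfl⟩ := Finset.mem_image.mp h2
        exact ⟨Finset.mem_union_left _ hp1.1,
          Finset.mem_union_right _ (Finset.mem_biUnion.mpr ⟨p, hp, hx⟩)⟩
      · obtain ⟨x, hx, rfl⟩ := Finset.mem_image.mp h2
        exact ⟨Finset.mem_union_right _ (Finset.mem_biUnion.mpr ⟨p, hp, hx⟩),
          Finset.mem_union_left _ hp1.2⟩

open Classical in
/-- The transitive hull `Tr(G)` of `G`. -/
noncomputable def trHull (G : Dgraph) : Dgraph where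
  V := G.V
  nonempty := G.nonempty
  A := (G.V ×ˢ G.V).filter (fun p => Relation.TransGen (fun a b => (a, b) ∈ G.A) p.1 p.2)
  A_sub := by
    intro p hp
    exact Finset.mem_product.mp (Finset.mem_filter.mp hp).1

/-- The digraph obtained from `D` by adding a loop at every vertex of `S`. -/
def withLoops (D : Dgraph) (S : Finset ℕ) : Dgraph where
  V := D.V
  nonempty := D.nonempty
  A := D.A ∪ (S ∩ D.V).image (fun x => (x, x))
  A_sub := by
    intro p hp
    rcases Finset.mem_union.mp hp with h | h
    · exact D.A_sub p h
    · obtain ⟨x, hx, rfl⟩ := Finset.mem_image.mp h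
      have h2 := Finset.mem_inter.mp hx
      exact ⟨h2.2, h2.2⟩

/-! `G ∈ 𝔗ₐ` holds exactly when some potential `F : ℕ → ℕ` strictly increases along every proper
arc; the number of vertices strictly below `v` is one. Taking `2 F` on the old vertices and
`2 F v + 1` on the new vertices clamped on a proper arc `vw` gives such a potential for `G(α)_ν`.
The transitive hull of an acyclic digraph is antisymmetric, and when `G` is reflexive the only
loops it lacks are at the new vertices. -/

namespace Dgraph

variable {G : Dgraph}

def ProperAdj (G : Dgraph) (v w : ℕ) : Prop := (v, w) ∈ G.A ∧ v ≠ w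

lemma mem_Astar_s18 {p : ℕ × ℕ} : p ∈ G.Astar ↔ G.ProperAdj p.1 p.2 := by
  simp [Astar, ProperAdj]

lemma ProperAdj.mem_V {v w : ℕ} (h : G.ProperAdj v w) : v ∈ G.V ∧ w ∈ G.V :=
  G.A_sub _ h.1

lemma hasClosedWalkStar_iff : G.HasClosedWalkStar ↔ ∃ a, Relation.TransGen G.ProperAdj a a := by
  constructor
  · rintro ⟨_ | ⟨a, _ | ⟨b, l⟩⟩, -, hchain, hlen, hends⟩
    · simp at hlen
    · simp at hlen
    · replace hchain : G.ProperAdj a b ∧ (b :: l).IsChain G.ProperAdj :=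
        List.isChain_cons_cons.mp hchain
      have hlast : (b :: l).getLast (List.cons_ne_nil _ _) = a := by
        simpa [List.getLast?_eq_some_getLast] using hends.symm
      refine ⟨a, Relation.TransGen.head' hchain.1 ?_⟩
      simpa [hlast] using
        List.relationReflTransGen_of_exists_isChain _ hchain.2 (List.cons_ne_nil _ _)
  · rintro ⟨a, h⟩
    obtain ⟨b, hab, hba⟩ := Relation.TransGen.head'_iff.mp h
    obtain ⟨l, hchain, hlast⟩ := List.exists_isChain_cons_of_relationReflTransGen hba
    have hwalk : (a :: b :: l).IsChain G.ProperAdj := hchain.cons_cons hab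
    refine ⟨a :: b :: l, ?_, hwalk, by simp, ?_⟩
    · exact hwalk.induction (· ∈ G.V) _ (fun _ _ hxy _ => hxy.mem_V.2) (fun _ => hab.mem_V.1)
    · simp [List.getLast?_eq_some_getLast, hlast]

lemma memTa_iff : G.MemTa ↔ ∀ a, ¬ Relation.TransGen G.ProperAdj a a := by
  simp [MemTa, hasClosedWalkStar_iff]

lemma memTa_of_strictMono {β : Type*} [Preorder β] (F : ℕ → β)
    (hF : ∀ v w, G.ProperAdj v w → F v < F w) : G.MemTa :=
  memTa_iff.mpr fun a h => lt_irrefl (F a) <| by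
    simpa only [Relation.transGen_eq_self] using h.lift F hF

open Classical in
noncomputable def rank (G : Dgraph) (a : ℕ) : ℕ :=
  (G.V.filter (Relation.TransGen G.ProperAdj · a)).card

lemma rank_lt_rank (hG : G.MemTa) {a b : ℕ} (h : G.ProperAdj a b) : G.rank a < G.rank b := by
  classical
  refine Finset.card_lt_card ((Finset.ssubset_iff_of_subset ?_).mpr ⟨a, ?_, ?_⟩)
  · intro c hc
    simp only [Finset.mem_filter] at hc ⊢
    exact ⟨hc.1, hc.2.tail h⟩
  · exact Finset.mem_filter.mpr ⟨h.mem_V.1, .single h⟩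
  · exact fun ha => memTa_iff.mp hG a (Finset.mem_filter.mp ha).2

lemma memTa_iff_exists_strictMono :
    G.MemTa ↔ ∃ F : ℕ → ℕ, ∀ v w, G.ProperAdj v w → F v < F w :=
  ⟨fun hG => ⟨G.rank, fun _ _ => rank_lt_rank hG⟩, fun ⟨F, hF⟩ => memTa_of_strictMono F hF⟩

lemma reflTransGen_properAdj_of_transGen {v w : ℕ}
    (h : Relation.TransGen (fun a b => (a, b) ∈ G.A) v w) :
    Relation.ReflTransGen G.ProperAdj v w := by
  refine h.to_reflTransGen.lift' id fun a b hab => ?_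
  rcases eq_or_ne a b with rfl | hne
  · exact .refl
  · exact .single ⟨hab, hne⟩

lemma mem_trHull_A {v w : ℕ} :
    (v, w) ∈ (trHull G).A ↔ Relation.TransGen (fun a b => (a, b) ∈ G.A) v w := by
  classical
  refine ⟨fun h => (Finset.mem_filter.mp h).2, fun h => ?_⟩
  obtain ⟨c, hvc, -⟩ := Relation.TransGen.head'_iff.mp h
  obtain ⟨c', -, hc'w⟩ := Relation.TransGen.tail'_iff.mp h
  exact Finset.mem_filter.mpr
    ⟨Finset.mem_product.mpr ⟨(G.A_sub _ hvc).1, (G.A_sub _ hc'w).2⟩, h⟩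

lemma trHull_trans {u v w : ℕ} (huv : (u, v) ∈ (trHull G).A) (hvw : (v, w) ∈ (trHull G).A) :
    (u, w) ∈ (trHull G).A :=
  mem_trHull_A.mpr ((mem_trHull_A.mp huv).trans (mem_trHull_A.mp hvw))

lemma trHull_antisymm (hG : G.MemTa) {v w : ℕ} (hvw : (v, w) ∈ (trHull G).A)
    (hwv : (w, v) ∈ (trHull G).A) : v = w := by
  by_contra hne
  have hvw' := reflTransGen_properAdj_of_transGen (mem_trHull_A.mp hvw)
  have hwv' := reflTransGen_properAdj_of_transGen (mem_trHull_A.mp hwv)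
  obtain rfl | hvw' := Relation.reflTransGen_iff_eq_or_transGen.mp hvw'
  · exact hne rfl
  · exact memTa_iff.mp hG v (hvw'.trans_left hwv')

lemma isPoset_withLoops {S : Finset ℕ} (hrefl : ∀ v ∈ G.V, v ∉ S → (v, v) ∈ G.A)
    (hanti : ∀ v w, (v, w) ∈ G.A → (w, v) ∈ G.A → v = w)
    (htrans : ∀ u v w, (u, v) ∈ G.A → (v, w) ∈ G.A → (u, w) ∈ G.A) :
    (withLoops G S).IsPoset := by
  simp only [IsPoset, IsRefl, withLoops, Finset.mem_union, Finset.mem_image, Finset.mem_inter,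
    Prod.mk.injEq]
  refine ⟨fun v hv => ?_, ?_, ?_⟩
  · by_cases hvS : v ∈ S
    · exact .inr ⟨v, ⟨hvS, hv⟩, rfl, rfl⟩
    · exact .inl (hrefl v hv hvS)
  · rintro v w (hvw | ⟨x, -, rfl, rfl⟩) hwv
    · rcases hwv with hwv | ⟨y, -, rfl, rfl⟩
      · exact hanti v w hvw hwv
      · rfl
    · rfl
  · rintro u v w (huv | ⟨x, -, rfl, rfl⟩) hvw
    · rcases hvw with hvw | ⟨y, -, rfl, rfl⟩
      · exact .inl (htrans u v w huv hvw)
      · exact .inl huv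
    · exact hvw

end Dgraph

section extGraph

open Dgraph

variable {G : Dgraph} {X : ℕ × ℕ → Finset ℕ}

lemma mem_extGraph_A {u w : ℕ} : (u, w) ∈ (extGraph G X).A ↔
    (u, w) ∈ G.A ∨ ∃ p ∈ G.Astar, (u = p.1 ∧ w ∈ X p) ∨ (u ∈ X p ∧ w = p.2) := by
  simp only [extGraph, Finset.mem_union, Finset.mem_biUnion, Finset.mem_image, Prod.mk.injEq]
  grind

def extPotential (G : Dgraph) (X : ℕ × ℕ → Finset ℕ) (F : ℕ → ℕ) (x : ℕ) : ℕ :=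
  if x ∈ G.V then 2 * F x else 2 * ((G.Astar.filter (x ∈ X ·)).sup fun p => F p.1) + 1

lemma extPotential_of_mem_V (F : ℕ → ℕ) {x : ℕ} (hx : x ∈ G.V) :
    extPotential G X F x = 2 * F x := if_pos hx

lemma extPotential_of_mem_X (F : ℕ → ℕ)
    (hdisj : ∀ p ∈ G.Astar, ∀ q ∈ G.Astar, p ≠ q → Disjoint (X p) (X q))
    (hdisjV : ∀ p ∈ G.Astar, Disjoint (X p) G.V) {p : ℕ × ℕ} (hp : p ∈ G.Astar) {x : ℕ}
    (hx : x ∈ X p) : extPotential G X F x = 2 * F p.1 + 1 := by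
  have hxV : x ∉ G.V := Finset.disjoint_left.mp (hdisjV p hp) hx
  have hunique : G.Astar.filter (x ∈ X ·) = {p} := by
    refine Finset.eq_singleton_iff_unique_mem.mpr ⟨Finset.mem_filter.mpr ⟨hp, hx⟩, fun q hq => ?_⟩
    rw [Finset.mem_filter] at hq
    by_contra hqp
    exact Finset.disjoint_left.mp (hdisj q hq.1 p hp hqp) hq.2 hx
  simp [extPotential, hxV, hunique]

lemma extPotential_lt {F : ℕ → ℕ} (hF : ∀ v w, G.ProperAdj v w → F v < F w)
    (hdisj : ∀ p ∈ G.Astar, ∀ q ∈ G.Astar, p ≠ q → Disjoint (X p) (X q))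
    (hdisjV : ∀ p ∈ G.Astar, Disjoint (X p) G.V) {u w : ℕ} (h : (extGraph G X).ProperAdj u w) :
    extPotential G X F u < extPotential G X F w := by
  obtain ⟨huw, hne⟩ := h
  rcases mem_extGraph_A.mp huw with hG | ⟨p, hp, ⟨rfl, hw⟩ | ⟨hu, rfl⟩⟩
  · have hlt := hF u w ⟨hG, hne⟩
    obtain ⟨hu, hw⟩ : u ∈ G.V ∧ w ∈ G.V := G.A_sub _ hG
    rw [extPotential_of_mem_V F hu, extPotential_of_mem_V F hw]
    omega
  · rw [extPotential_of_mem_V F (mem_Astar_s18.mp hp).mem_V.1,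
      extPotential_of_mem_X F hdisj hdisjV hp hw]
    omega
  · have := hF _ _ (mem_Astar_s18.mp hp)
    rw [extPotential_of_mem_X F hdisj hdisjV hp hu,
      extPotential_of_mem_V F (mem_Astar_s18.mp hp).mem_V.2]
    omega

lemma extGraph_memTa (hG : G.MemTa)
    (hdisj : ∀ p ∈ G.Astar, ∀ q ∈ G.Astar, p ≠ q → Disjoint (X p) (X q))
    (hdisjV : ∀ p ∈ G.Astar, Disjoint (X p) G.V) : (extGraph G X).MemTa := by
  obtain ⟨F, hF⟩ := memTa_iff_exists_strictMono.mp hG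
  exact memTa_of_strictMono _ fun _ _ => extPotential_lt hF hdisj hdisjV

end extGraph

theorem stmt_18_general (G : Dgraph) (hG : G.MemTa)
    (X : ℕ × ℕ → Finset ℕ)
    (hdisj : ∀ p ∈ G.Astar, ∀ q ∈ G.Astar, p ≠ q → Disjoint (X p) (X q))
    (hdisjV : ∀ p ∈ G.Astar, Disjoint (X p) G.V) :
    (extGraph G X).MemTa ∧
    (G.IsPoset →
      (withLoops (trHull (extGraph G X)) (G.Astar.biUnion X)).IsPoset) := by
  have hext := extGraph_memTa hG hdisj hdisjV
  refine ⟨hext, ?_⟩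
  rintro ⟨hrefl, -, -⟩
  refine isPoset_withLoops (fun v hv hvX => ?_) (fun _ _ => trHull_antisymm hext)
    fun _ _ _ => trHull_trans
  have hvG : v ∈ G.V := (Finset.mem_union.mp hv).resolve_right hvX
  exact mem_trHull_A.mpr (.single (Finset.mem_union_left _ (hrefl v hvG)))

theorem stmt_18 (G : Dgraph) (hG : G.MemTa) (α : ℕ × ℕ → ℕ) (ν : ℕ)
    (X : ℕ × ℕ → Finset ℕ)
    (hdisj : ∀ p ∈ G.Astar, ∀ q ∈ G.Astar, p ≠ q → Disjoint (X p) (X q))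
    (hdisjV : ∀ p ∈ G.Astar, Disjoint (X p) G.V)
    (hcard : ∀ p ∈ G.Astar, (X p).card = ν * α p) :
    (extGraph G X).MemTa ∧
    (G.IsPoset →
      (withLoops (trHull (extGraph G X)) (G.Astar.biUnion X)).IsPoset) :=
  stmt_18_general G hG X hdisj hdisjV
end

section
/- Let G be a digraph, H a reflexive digraph, and α an arc weight of G. Then for every ν ∈ ℕ₀: #𝓗(G(α)_ν, H) = Σ_{ξ ∈ 𝓗(G,H)} π_α(ξ)^ν. More precisely, for every ξ ∈ 𝓗(G,H), the number of homomorphisms ζ ∈ 𝓗(G(α)_ν, H) whose restriction to V(G) equals ξ is exactly π_α(ξ)^ν, and every ζ ∈ 𝓗(G(α)_ν, H) restricts to a homomorphism in 𝓗(G,H). -/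
open Dgraph

/-- `π_α(ξ)` for an arc weight `α` of `G` and a homomorphism `ξ` into `H`. -/
def piw (G H : Dgraph) (α : ℕ × ℕ → ℕ) (f : ℕ → ℕ) : ℕ :=
  ∏ p ∈ G.Astar, (H.iota (f p.1) (f p.2)) ^ (α p)

lemma hom_finite (G H : Dgraph) : (Hom G H).Finite := by
  classical
  have himage : ((fun f : ℕ → ℕ => fun v : G.V => f (v : ℕ)) '' Hom G H).Finite := by
    apply Set.Finite.subset (Set.Finite.pi (fun _ : G.V => H.V.finite_toSet))
    rintro g ⟨f, hf, rfl⟩ v _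
    exact hf.1 v v.2
  refine Set.Finite.of_finite_image himage ?_
  intro f hf g hg h
  funext x
  by_cases hx : x ∈ G.V
  · exact congrFun h ⟨x, hx⟩
  · rw [hf.2.2 x hx, hg.2.2 x hx]

lemma restrict_hom (G H : Dgraph) (X : ℕ × ℕ → Finset ℕ) :
    ∀ ζ ∈ Hom (extGraph G X) H, restrict G.V ζ ∈ Hom G H := by
  intro ζ ⟨h1, h2, h3⟩
  refine ⟨?_, ?_, ?_⟩
  · intro v hv
    simpa [restrict, hv] using h1 v (Finset.mem_union_left _ hv)
  · intro p hp
    have h1' := G.A_sub p hp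
    simpa [restrict, h1'.1, h1'.2] using h2 p (Finset.mem_union_left _ hp)
  · intro v hv; simp [restrict, hv]

lemma fiber_count (G H : Dgraph) (X : ℕ × ℕ → Finset ℕ)
    (hdisj : ∀ p ∈ G.Astar, ∀ q ∈ G.Astar, p ≠ q → Disjoint (X p) (X q))
    (hdisjV : ∀ p ∈ G.Astar, Disjoint (X p) G.V)
    (ξ : ℕ → ℕ) (hξ : ξ ∈ Hom G H) :
    {ζ ∈ Hom (extGraph G X) H | ∀ v ∈ G.V, ζ v = ξ v}.ncard
      = ∏ p ∈ G.Astar, (H.iota (ξ p.1) (ξ p.2)) ^ (X p).card := by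
  classical
  set W : Finset ℕ := G.Astar.biUnion X with hW
  have hWV : ∀ v ∈ G.V, v ∉ W := by
    intro v hv hvW
    obtain ⟨p, hp, hx⟩ := Finset.mem_biUnion.mp hvW
    exact Finset.disjoint_left.mp (hdisjV p hp) hx hv
  have hfilt : ∀ p ∈ G.Astar, ∀ x ∈ X p,
      G.Astar.filter (fun q => x ∈ X q) = {p} := by
    intro p hp x hx
    refine Finset.eq_singleton_iff_unique_mem.mpr
      ⟨Finset.mem_filter.mpr ⟨hp, hx⟩, ?_⟩
    intro q hq
    obtain ⟨hq1, hq2⟩ := Finset.mem_filter.mp hq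
    by_contra hne
    exact Finset.disjoint_left.mp (hdisj q hq1 p hp hne) hq2 hx
  set C : ℕ → Finset ℕ := fun x =>
    (G.Astar.filter (fun q => x ∈ X q)).biUnion
      (fun q => H.interval (ξ q.1) (ξ q.2)) with hC
  have hCx : ∀ p ∈ G.Astar, ∀ x ∈ X p, C x = H.interval (ξ p.1) (ξ p.2) := by
    intro p hp x hx
    rw [hC]
    simp [hfilt p hp x hx]
  have harc1 : ∀ p ∈ G.Astar, ∀ x ∈ X p, (p.1, x) ∈ (extGraph G X).A := by
    intro p hp x hx
    exact Finset.mem_union_right _ (Finset.mem_biUnion.mpr ⟨p, hp,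
      Finset.mem_union_left _ (Finset.mem_image.mpr ⟨x, hx, rfl⟩)⟩)
  have harc2 : ∀ p ∈ G.Astar, ∀ x ∈ X p, (x, p.2) ∈ (extGraph G X).A := by
    intro p hp x hx
    exact Finset.mem_union_right _ (Finset.mem_biUnion.mpr ⟨p, hp,
      Finset.mem_union_right _ (Finset.mem_image.mpr ⟨x, hx, rfl⟩)⟩)
  have hmemW : ∀ x ∈ W, x ∈ (extGraph G X).V := by
    intro x hx
    exact Finset.mem_union_right _ hx
  set Φ : (∀ a ∈ W, ℕ) → (ℕ → ℕ) :=
    fun g x => if h : x ∈ W then g x h else ξ x with hΦ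
  have hset : {ζ ∈ Hom (extGraph G X) H | ∀ v ∈ G.V, ζ v = ξ v}
      = ↑((W.pi (fun x => C x)).image Φ) := by
    ext ζ
    rw [Finset.coe_image, Set.mem_image]
    constructor
    · rintro ⟨⟨h1, h2, h3⟩, h4⟩
      refine ⟨fun x _ => ζ x, ?_, ?_⟩
      · rw [Finset.mem_coe, Finset.mem_pi]
        intro x hx
        obtain ⟨p, hp, hxp⟩ := Finset.mem_biUnion.mp hx
        rw [hCx p hp x hxp]
        have hp1 : p.1 ∈ G.V := (G.A_sub p (Finset.mem_of_mem_filter p hp)).1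
        have hp2 : p.2 ∈ G.V := (G.A_sub p (Finset.mem_of_mem_filter p hp)).2
        have e1 : (ζ p.1, ζ x) ∈ H.A := h2 (p.1, x) (harc1 p hp x hxp)
        have e2 : (ζ x, ζ p.2) ∈ H.A := h2 (x, p.2) (harc2 p hp x hxp)
        rw [h4 p.1 hp1] at e1
        rw [h4 p.2 hp2] at e2
        exact Finset.mem_filter.mpr ⟨h1 x (hmemW x hx), e1, e2⟩
      · funext x
        rw [hΦ]
        by_cases hx : x ∈ W
        · simp [hx]
        · simp only [dif_neg hx]
          by_cases hxv : x ∈ G.V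
          · exact (h4 x hxv).symm
          · have hnE : x ∉ (extGraph G X).V := by
              intro hE
              rcases Finset.mem_union.mp hE with h | h
              · exact hxv h
              · exact hx h
            rw [hξ.2.2 x hxv, h3 x hnE]
    · rintro ⟨g, hg, rfl⟩
      rw [Finset.mem_coe, Finset.mem_pi] at hg
      have hgG : ∀ v ∈ G.V, Φ g v = ξ v := by
        intro v hv
        rw [hΦ]
        simp [hWV v hv]
      have hval : ∀ x (hx : x ∈ W), Φ g x = g x hx := by
        intro x hx
        rw [hΦ]
        simp [hx]
      refine ⟨⟨?_, ?_, ?_⟩, hgG⟩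
      · intro v hv
        rcases Finset.mem_union.mp hv with h | h
        · rw [hgG v h]; exact hξ.1 v h
        · rw [hval v h]
          obtain ⟨p, hp, hxp⟩ := Finset.mem_biUnion.mp h
          have := hg v h
          rw [hCx p hp v hxp] at this
          exact (Finset.mem_filter.mp this).1
      · intro q hq
        rcases Finset.mem_union.mp hq with h | h
        · have h1 := G.A_sub q h
          rw [hgG q.1 h1.1, hgG q.2 h1.2]
          exact hξ.2.1 q h
        · obtain ⟨p, hp, hq2⟩ := Finset.mem_biUnion.mp h
          have hp1 : p.1 ∈ G.V := (G.A_sub p (Finset.mem_of_mem_filter p hp)).1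
          have hp2 : p.2 ∈ G.V := (G.A_sub p (Finset.mem_of_mem_filter p hp)).2
          rcases Finset.mem_union.mp hq2 with h2 | h2
          · obtain ⟨x, hx, rfl⟩ := Finset.mem_image.mp h2
            have hxW : x ∈ W := Finset.mem_biUnion.mpr ⟨p, hp, hx⟩
            have := hg x hxW
            rw [hCx p hp x hx] at this
            simp only
            rw [hgG p.1 hp1, hval x hxW]
            exact (Finset.mem_filter.mp this).2.1
          · obtain ⟨x, hx, rfl⟩ := Finset.mem_image.mp h2
            have hxW : x ∈ W := Finset.mem_biUnion.mpr ⟨p, hp, hx⟩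
            have := hg x hxW
            rw [hCx p hp x hx] at this
            simp only
            rw [hgG p.2 hp2, hval x hxW]
            exact (Finset.mem_filter.mp this).2.2
      · intro v hv
        have hvG : v ∉ G.V := fun h => hv (Finset.mem_union_left _ h)
        have hvW : v ∉ W := fun h => hv (Finset.mem_union_right _ h)
        rw [hΦ]
        simp only [dif_neg hvW]
        exact hξ.2.2 v hvG
  have hinj : Set.InjOn Φ ↑(W.pi (fun x => C x)) := by
    intro g hg g' hg' heq
    funext x hx
    have := congrFun heq x
    rw [hΦ] at this
    simpa [dif_pos hx] using this
  rw [hset, Set.ncard_coe_finset, Finset.card_image_of_injOn hinj,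
    Finset.card_pi, hW]
  rw [Finset.prod_biUnion (fun p hp q hq hne =>
    hdisj p (Finset.mem_coe.mp hp) q (Finset.mem_coe.mp hq) hne)]
  apply Finset.prod_congr rfl
  intro p hp
  rw [Finset.prod_congr rfl
    (fun x hx => congrArg Finset.card (hCx p hp x hx)),
    Finset.prod_const]
  rfl

theorem stmt_19 (G H : Dgraph) (hHr : H.IsRefl) (α : ℕ × ℕ → ℕ) (ν : ℕ)
    (X : ℕ × ℕ → Finset ℕ)
    (hdisj : ∀ p ∈ G.Astar, ∀ q ∈ G.Astar, p ≠ q → Disjoint (X p) (X q))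
    (hdisjV : ∀ p ∈ G.Astar, Disjoint (X p) G.V)
    (hcard : ∀ p ∈ G.Astar, (X p).card = ν * α p) :
    (Hom (extGraph G X) H).ncard = ∑ᶠ ξ ∈ Hom G H, (piw G H α ξ) ^ ν ∧
    (∀ ξ ∈ Hom G H,
      {ζ ∈ Hom (extGraph G X) H | ∀ v ∈ G.V, ζ v = ξ v}.ncard
        = (piw G H α ξ) ^ ν) ∧
    ∀ ζ ∈ Hom (extGraph G X) H, restrict G.V ζ ∈ Hom G H := by
  classical
  have part2 : ∀ ξ ∈ Hom G H,
      {ζ ∈ Hom (extGraph G X) H | ∀ v ∈ G.V, ζ v = ξ v}.ncard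
        = (piw G H α ξ) ^ ν := by
    intro ξ hξ
    rw [fiber_count G H X hdisj hdisjV ξ hξ]
    rw [piw, ← Finset.prod_pow]
    refine Finset.prod_congr rfl fun p hp => ?_
    rw [hcard p hp, ← pow_mul, mul_comm]
  refine ⟨?_, part2, restrict_hom G H X⟩
  have hEfin := hom_finite (extGraph G X) H
  have hGfin := hom_finite G H
  have hcoeG : Hom G H = ↑hGfin.toFinset := (Set.Finite.coe_toFinset hGfin).symm
  rw [hcoeG, finsum_mem_coe_finset, Set.ncard_eq_toFinset_card _ hEfin]
  rw [Finset.card_eq_sum_card_fiberwise (f := restrict G.V)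
    (t := hGfin.toFinset) (fun ζ hζ => hGfin.mem_toFinset.mpr
      (restrict_hom G H X ζ (hEfin.mem_toFinset.mp hζ)))]
  refine Finset.sum_congr rfl fun ξ hξ => ?_
  have hξ' : ξ ∈ Hom G H := hGfin.mem_toFinset.mp hξ
  rw [← part2 ξ hξ']
  have hseteq : {ζ ∈ Hom (extGraph G X) H | ∀ v ∈ G.V, ζ v = ξ v}
      = ↑(hEfin.toFinset.filter (fun ζ => restrict G.V ζ = ξ)) := by
    ext ζ
    simp only [Set.mem_setOf_eq, Finset.coe_filter, hEfin.mem_toFinset]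
    constructor
    · rintro ⟨hζ, h4⟩
      refine ⟨hζ, funext fun v => ?_⟩
      by_cases hv : v ∈ G.V
      · simpa [restrict, hv] using h4 v hv
      · simp [restrict, hv, hξ'.2.2 v hv]
    · rintro ⟨hζ, h4⟩
      refine ⟨hζ, fun v hv => ?_⟩
      have := congrFun h4 v
      simpa [restrict, hv] using this
  rw [hseteq, Set.ncard_coe_finset]
end
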